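/- Let k be a commutative unital ring, C_∞ the free associative unital k-algebra on generators d_1, d_2, …, bigraded by assigning the word d_{i_1}⋯d_{i_k} bidegree (−∑_j i_j, k − ∑_j i_j), and let δ_0 be the k-linear endomorphism determined on words by δ_0(d_{i_1}⋯d_{i_k}) = ∑_{j=1}^{k} (-1)^{(i_1+1)+⋯+(i_{j-1}+1)} d_{i_1}⋯d_{i_{j-1}} S_{i_j} d_{i_{j+1}}⋯d_{i_k}, where S_1 = 0 and S_m = ∑_{u+v=m, u,v≥1} (-1)^{u+1} d_u d_v. Then δ_0 is homogeneous of bidegree (0,1), and the δ_0-cohomology of C_∞ is: H^{0,0}(C_∞) = k·[1], H^{-1,0}(C_∞) = k·[d_1], and H^{p,q}(C_∞) = 0 for every (p,q) ∉ {(0,0), (−1,0)} (i.e., every homogeneous x of bidegree (p,q) with δ_0 x = 0 equals δ_0 y for some homogeneous y of bidegree (p,q−1)). -/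

import Mathlib

set_option linter.unusedVariables false
set_option synthInstance.maxHeartbeats 1000000
set_option maxHeartbeats 1000000

universe u

noncomputable section

/-- The free associative unital `k`-algebra on generators `d_1, d_2, …`
(indexed by `ℕ+`), realized as the monoid algebra on the free monoid on `ℕ+`,
with `k`-basis the words `d_{i_1} ⋯ d_{i_k}`. -/
abbrev Cinf (k : Type u) [CommRing k] := MonoidAlgebra k (FreeMonoid ℕ+)

variable (k : Type u) [CommRing k]

/-- The basis word `d_{i_1} ⋯ d_{i_k}` of `C_∞`. -/
def word (w : List ℕ+) : Cinf k :=
  MonoidAlgebra.of k (FreeMonoid ℕ+) (FreeMonoid.ofList w)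

/-- `S_1 = 0` and `S_m = ∑_{u+v=m, u,v ≥ 1} (-1)^{u+1} d_u d_v` for `m ≥ 2`. -/
def Sel (m : ℕ+) : Cinf k :=
  ∑ u : Fin ((m : ℕ) - 1), ((-1 : ℤ) ^ ((u : ℕ) + 1 + 1)) •
    word k [⟨(u : ℕ) + 1, Nat.succ_pos _⟩,
            ⟨(m : ℕ) - ((u : ℕ) + 1), by have := u.isLt; omega⟩]

/-- The value of `δ_0` on the word `d_{i_1} ⋯ d_{i_k}`:
`∑_{j=1}^{k} (-1)^{(i_1+1)+⋯+(i_{j-1}+1)} d_{i_1} ⋯ d_{i_{j-1}} S_{i_j} d_{i_{j+1}} ⋯ d_{i_k}`. -/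
def deltaWord (w : List ℕ+) : Cinf k :=
  ∑ j : Fin w.length,
    ((-1 : ℤ) ^ (∑ t : Fin (j : ℕ), ((w.get ⟨(t : ℕ), Nat.lt_trans t.isLt j.isLt⟩ : ℕ) + 1))) •
      (word k (w.take (j : ℕ)) * Sel k (w.get j) * word k (w.drop ((j : ℕ) + 1)))

/-- The `k`-linear endomorphism `δ_0` of `C_∞`, determined on words by `deltaWord`. -/
def delta0 : Cinf k →ₗ[k] Cinf k :=
  (Finsupp.lift (Cinf k) k (FreeMonoid ℕ+)) (fun w => deltaWord k w.toList) ∘ₗ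
    (MonoidAlgebra.coeffLinearEquiv k).toLinearMap

/-- The value of `h` on words: `h(1) = 0`, `h(d_{i_1}⋯d_{i_k}) = 0` if `k = 1` or
`i_1 > 1`, and `h(d_1 d_{i_2} ⋯ d_{i_k}) = d_{i_2+1} d_{i_3} ⋯ d_{i_k}`. -/
def hWord : List ℕ+ → Cinf k
  | [] => 0
  | [_] => 0
  | (i :: j :: w) => if i = 1 then word k ((j + 1) :: w) else 0

/-- The `k`-linear endomorphism `h` of `C_∞`, determined on words by `hWord`. -/
def hmap : Cinf k →ₗ[k] Cinf k :=
  (Finsupp.lift (Cinf k) k (FreeMonoid ℕ+)) (fun w => hWord k w.toList) ∘ₗ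
    (MonoidAlgebra.coeffLinearEquiv k).toLinearMap

/-- The bidegree of a word: `d_{i_1}⋯d_{i_k}` has bidegree `(-∑ i_j, k - ∑ i_j)`. -/
def wordDeg (w : List ℕ+) : ℤ × ℤ :=
  (-(w.map (fun i => ((i : ℕ) : ℤ))).sum,
    (w.length : ℤ) - (w.map (fun i => ((i : ℕ) : ℤ))).sum)

/-- `x ∈ C_∞` is homogeneous of bidegree `(p,q)`: every word in its support has
bidegree `(p,q)`. -/
def IsHomog (p q : ℤ) (x : Cinf k) : Prop :=
  ∀ w ∈ (x.coeff : FreeMonoid ℕ+ →₀ k).support, wordDeg w.toList = (p, q)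

end


noncomputable section AuxLemmas

variable (k : Type u) [CommRing k]

/-- auxiliary word shape `d_{a+1} d_{b+1} v` -/
def W (a b : ℕ) (v : List ℕ+) : Cinf k :=
  word k (⟨a+1, by omega⟩ :: ⟨b+1, by omega⟩ :: v)

lemma word_append (a b : List ℕ+) : word k (a ++ b) = word k a * word k b := by
  simp [word, ← map_mul]

lemma word_nil : word k [] = 1 := rfl

lemma lift_word (w : List ℕ+) (f : FreeMonoid ℕ+ → Cinf k) :
    (Finsupp.lift (Cinf k) k (FreeMonoid ℕ+)) f (word k w).coeff = f (FreeMonoid.ofList w) := by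
  simp [word, MonoidAlgebra.of_apply, Finsupp.lift_apply]

lemma delta0_word (w : List ℕ+) : delta0 k (word k w) = deltaWord k w := by
  have := lift_word k w (fun w => deltaWord k (FreeMonoid.toList w))
  exact this

lemma hmap_word (w : List ℕ+) : hmap k (word k w) = hWord k w := by
  have := lift_word k w (fun w => hWord k (FreeMonoid.toList w))
  exact this

lemma single_eq_smul_word (u : FreeMonoid ℕ+) (b : k) :
    (MonoidAlgebra.single u b : Cinf k) = b • word k u.toList := by
  rw [show word k u.toList = MonoidAlgebra.single u (1:k) from rfl, MonoidAlgebra.smul_single, smul_eq_mul,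
    mul_one]

lemma Sel_one : Sel k 1 = 0 := by
  rw [Sel]; exact Finset.sum_eq_zero fun u _ => absurd u.isLt (by simp)

lemma Sel_mul (m : ℕ+) (v : List ℕ+) :
    Sel k m * word k v =
      ∑ u ∈ Finset.range ((m:ℕ)-1), (-1:ℤ)^u • W k u ((m:ℕ)-u-2) v := by
  rw [Sel, Finset.sum_mul]
  rw [← Fin.sum_univ_eq_sum_range (fun u => (-1:ℤ)^u • W k u ((m:ℕ)-u-2) v)]
  refine Finset.sum_congr rfl fun u _ => ?_
  have hu := u.isLt
  rw [smul_mul_assoc, ← word_append]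
  have h1 : ((⟨(m:ℕ) - ((u:ℕ)+1), by omega⟩ : ℕ+)) = (⟨(m:ℕ)-(u:ℕ)-2+1, by omega⟩ : ℕ+) := by
    ext
    show (m:ℕ) - ((u:ℕ)+1) = (m:ℕ)-(u:ℕ)-2+1
    omega
  have h2 : ((-1:ℤ) ^ ((u:ℕ) + 1 + 1)) = (-1:ℤ)^(u:ℕ) := by
    rw [pow_succ, pow_succ]; ring
  rw [h2, W, h1]
  rfl

lemma deltaWord_nil : deltaWord k [] = 0 := by simp [deltaWord]

lemma deltaWord_cons (i : ℕ+) (w : List ℕ+) :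
    deltaWord k (i :: w) = Sel k i * word k w +
      ((-1:ℤ)^((i:ℕ)+1)) • (word k [i] * deltaWord k w) := by
  rw [deltaWord]
  simp only [List.length_cons]
  rw [Fin.sum_univ_succ]
  congr 1
  · rw [Finset.sum_eq_zero fun x _ => absurd x.isLt (by simp)]; simp [word_nil]
  · rw [deltaWord, Finset.mul_sum, Finset.smul_sum]
    refine Finset.sum_congr rfl fun j _ => ?_
    have hexp : (∑ t : Fin ((j.succ : Fin (w.length+1)) : ℕ),
        (((i :: w).get ⟨(t : ℕ), Nat.lt_trans t.isLt (j.succ).isLt⟩ : ℕ) + 1)) =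
        ((i:ℕ)+1) + ∑ t : Fin (j : ℕ), ((w.get ⟨(t : ℕ), Nat.lt_trans t.isLt j.isLt⟩ : ℕ) + 1) := by
      simp only [Fin.val_succ]
      rw [Fin.sum_univ_succ]
      rfl
    rw [hexp, pow_add, mul_smul]
    simp only [Fin.val_succ, List.take_succ_cons, List.drop_succ_cons]
    rw [mul_smul_comm]
    congr 1
    rw [show (i :: List.take (↑j) w) = [i] ++ List.take (↑j) w from rfl, word_append,
      mul_assoc, mul_assoc]
    rw [show (i::w).get j.succ = w.get j from rfl, mul_assoc]

lemma hWord_nil : hWord k [] = 0 := rfl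

lemma hWord_single (i : ℕ+) : hWord k [i] = 0 := rfl

lemma hWord_cons (i j : ℕ+) (v : List ℕ+) :
    hWord k (i :: j :: v) = if i = 1 then word k ((j + 1) :: v) else 0 := rfl

lemma hmap_mul_ne (a : ℕ+) (ha : a ≠ 1) :
    (hmap k) ∘ₗ (LinearMap.mulLeft k (word k [a])) = 0 := by
  refine MonoidAlgebra.lhom_ext' fun u => LinearMap.ext fun b => ?_
  show (hmap k ∘ₗ LinearMap.mulLeft k (word k [a])) (MonoidAlgebra.single u b) =
    (0 : Cinf k →ₗ[k] Cinf k) (MonoidAlgebra.single u b)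
  rw [single_eq_smul_word, map_smul, map_smul]
  congr 1
  show hmap k (word k [a] * word k (FreeMonoid.toList u)) = 0
  rw [← word_append, hmap_word]
  rcases hu : u.toList with _ | ⟨j, v⟩
  · rw [show ([a] ++ [] : List ℕ+) = [a] from rfl, hWord_single]
  · rw [show ([a] ++ (j :: v) : List ℕ+) = a :: j :: v from rfl, hWord_cons, if_neg ha]

lemma hmap_mul_one (a : ℕ+) :
    (hmap k) ∘ₗ (LinearMap.mulLeft k (word k [1, a])) =
      LinearMap.mulLeft k (word k [a+1]) := by
  refine MonoidAlgebra.lhom_ext' fun u => LinearMap.ext fun b => ?_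
  show (hmap k ∘ₗ LinearMap.mulLeft k (word k [1, a])) (MonoidAlgebra.single u b) =
    LinearMap.mulLeft k (word k [a+1]) (MonoidAlgebra.single u b)
  rw [single_eq_smul_word, map_smul, map_smul]
  congr 1
  show hmap k (word k [1, a] * word k (FreeMonoid.toList u)) =
    word k [a + 1] * word k (FreeMonoid.toList u)
  rw [← word_append, hmap_word, ← word_append]
  rw [show ([1, a] ++ u.toList : List ℕ+) = 1 :: a :: u.toList from rfl, hWord_cons,
    if_pos rfl]
  rfl

lemma hmap_mul_ne' (a : ℕ+) (ha : a ≠ 1) (x : Cinf k) : hmap k (word k [a] * x) = 0 := by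
  have := congrArg (fun f => (f : Cinf k →ₗ[k] Cinf k) x) (hmap_mul_ne k a ha)
  simpa using this

lemma hmap_mul_one' (a : ℕ+) (x : Cinf k) :
    hmap k (word k [1, a] * x) = word k [a+1] * x := by
  have := congrArg (fun f => (f : Cinf k →ₗ[k] Cinf k) x) (hmap_mul_one k a)
  simpa using this


lemma hmap_W0 (b : ℕ) (v : List ℕ+) :
    hmap k (W k 0 b v) = word k (⟨b+2, by omega⟩ :: v) := by
  rw [W, hmap_word]; erw [hWord_cons]; erw [if_pos (show (⟨0+1, by omega⟩ : ℕ+) = 1 from rfl)]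
  have hx : ((⟨b+1, by omega⟩ : ℕ+) + 1) = (⟨b+2, by omega⟩ : ℕ+) := by
    ext
    show (b+1) + 1 = b+2
    omega
  erw [hx]

lemma hmap_WS (a b : ℕ) (v : List ℕ+) :
    hmap k (W k (a+1) b v) = 0 := by
  rw [W, hmap_word]; erw [hWord_cons]; rw [if_neg]
  intro h
  have := congrArg (fun x : ℕ+ => (x:ℕ)) h
  simp at this

lemma h_Sel_mul (m : ℕ+) (hm : 2 ≤ (m:ℕ)) (v : List ℕ+) :
    hmap k (Sel k m * word k v) = word k (m :: v) := by
  rw [Sel_mul, map_sum]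
  have key : ∀ u ∈ Finset.range ((m:ℕ)-1),
      hmap k ((-1:ℤ)^u • W k u ((m:ℕ)-u-2) v) =
        if u = 0 then word k (m :: v) else 0 := by
    intro u hu
    rw [map_zsmul]
    match u with
    | 0 =>
      rw [hmap_W0, if_pos rfl, pow_zero, one_smul]
      have hx : (⟨(m:ℕ)-0-2+2, by omega⟩ : ℕ+) = m := by
        ext
        show (m:ℕ)-0-2+2 = (m:ℕ)
        omega
      rw [hx]
    | (a+1) =>
      rw [hmap_WS, smul_zero, if_neg (by omega)]
  rw [Finset.sum_congr rfl key, Finset.sum_ite_eq' (Finset.range ((m:ℕ)-1)) 0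
    (fun _ => word k (m :: v)), if_pos (by simp; omega)]

lemma hmap_one_W (a b : ℕ) (v : List ℕ+) :
    hmap k (word k [1] * W k a b v) = W k (a+1) b v := by
  rw [W, ← word_append, hmap_word]
  rw [show (([1] : List ℕ+) ++ (((⟨a+1, by omega⟩ : ℕ+) :: (⟨b+1, by omega⟩ : ℕ+) :: v) : List ℕ+))
      = (((1 : ℕ+) :: (⟨a+1, by omega⟩ : ℕ+) :: (⟨b+1, by omega⟩ : ℕ+) :: v) : List ℕ+) from rfl,
    ]; erw [hWord_cons]; rw [if_pos rfl, W]
  have hx : ((⟨a+1, by omega⟩ : ℕ+) + 1) = (⟨a+1+1, by omega⟩ : ℕ+) := by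
    ext
    show (a+1) + 1 = a+1+1
    omega
  erw [hx]

lemma h_one_Sel_mul (j : ℕ+) (v : List ℕ+) :
    hmap k (word k [1] * (Sel k j * word k v)) =
      ∑ u ∈ Finset.range ((j:ℕ)-1), (-1:ℤ)^u • W k (u+1) ((j:ℕ)-u-2) v := by
  rw [Sel_mul, Finset.mul_sum, map_sum]
  refine Finset.sum_congr rfl fun u hu => ?_
  rw [mul_smul_comm, map_zsmul, hmap_one_W]

lemma cancel_sum (j : ℕ+) (v : List ℕ+) :
    (∑ u ∈ Finset.range ((j:ℕ)-1), (-1:ℤ)^u • W k (u+1) ((j:ℕ)-u-2) v) +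
      (∑ a ∈ Finset.range (j:ℕ), (-1:ℤ)^a • W k a ((j:ℕ)-a-1) v) =
    W k 0 ((j:ℕ)-1) v := by
  have hj : (j:ℕ) = ((j:ℕ)-1)+1 := by
    have := j.pos; omega
  rw [show (∑ a ∈ Finset.range (j:ℕ), (-1:ℤ)^a • W k a ((j:ℕ)-a-1) v)
      = ∑ a ∈ Finset.range (((j:ℕ)-1)+1), (-1:ℤ)^a • W k a ((j:ℕ)-a-1) v by rw [← hj]]
  rw [Finset.sum_range_succ']
  rw [pow_zero, one_smul, ← add_assoc]
  have key : (∑ u ∈ Finset.range ((j:ℕ)-1), (-1:ℤ)^u • W k (u+1) ((j:ℕ)-u-2) v) +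
      (∑ i ∈ Finset.range ((j:ℕ)-1), (-1:ℤ)^(i+1) • W k (i+1) ((j:ℕ)-(i+1)-1) v) = 0 := by
    rw [← Finset.sum_add_distrib]
    apply Finset.sum_eq_zero
    intro u hu
    have harg : (j:ℕ)-(u+1)-1 = (j:ℕ)-u-2 := by omega
    rw [harg, pow_succ, mul_neg_one, neg_smul, add_neg_cancel]
  rw [key, zero_add, Nat.sub_zero]

lemma W_zero (j : ℕ+) (v : List ℕ+) : W k 0 ((j:ℕ)-1) v = word k (1 :: j :: v) := by
  rw [W]
  have h1 : (⟨0+1, by omega⟩ : ℕ+) = 1 := rfl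
  have h2 : (⟨(j:ℕ)-1+1, by omega⟩ : ℕ+) = j := by
    ext
    show (j:ℕ)-1+1 = (j:ℕ)
    have := j.pos; omega
  rw [h1, h2]
  rfl

lemma homotopy_word (w : List ℕ+) (h1 : w ≠ []) (h2 : w ≠ [1]) :
    delta0 k (hmap k (word k w)) + hmap k (delta0 k (word k w)) = word k w := by
  cases w with
  | nil => exact absurd rfl h1
  | cons i v =>
    by_cases hi : i = 1
    · subst hi
      cases v with
      | nil => exact absurd rfl h2
      | cons j v' =>
        rw [hmap_word, hWord_cons, if_pos rfl]
        rw [delta0_word, deltaWord_cons]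
        rw [delta0_word, deltaWord_cons k 1 (j :: v'), Sel_one, zero_mul, zero_add]
        simp only [PNat.one_coe]
        rw [show ((-1:ℤ)) ^ (1 + 1) = 1 by norm_num, one_smul]
        rw [deltaWord_cons k j v', mul_add, map_add]
        rw [h_one_Sel_mul]
        rw [mul_smul_comm, map_zsmul]
        rw [show word k [1] * (word k [j] * deltaWord k v')
            = word k ((1:ℕ+) :: [j]) * deltaWord k v' by
          rw [show ((1:ℕ+) :: [j]) = [(1:ℕ+)] ++ [j] from rfl, word_append, mul_assoc]]
        rw [show ((1:ℕ+) :: [j]) = [1, j] from rfl, hmap_mul_one']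
        have hsign : ((-1:ℤ)) ^ ((((j+1):ℕ+):ℕ) + 1) • (word k [j+1] * deltaWord k v') +
            ((-1:ℤ)) ^ (((j:ℕ)) + 1) • (word k [j+1] * deltaWord k v') = 0 := by
          have hc : (((j+1):ℕ+):ℕ) = (j:ℕ)+1 := rfl
          rw [hc, pow_succ ((-1:ℤ)) ((j:ℕ)+1), mul_neg_one, neg_smul, neg_add_cancel]
        have hSel : Sel k (j+1) * word k v' =
            ∑ a ∈ Finset.range (j:ℕ), (-1:ℤ)^a • W k a ((j:ℕ)-a-1) v' := by
          rw [Sel_mul]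
          have hc : (((j+1):ℕ+):ℕ) = (j:ℕ)+1 := rfl
          rw [hc, Nat.add_sub_cancel]
          refine Finset.sum_congr rfl fun a ha => ?_
          rw [show (j:ℕ)+1-a-2 = (j:ℕ)-a-1 by omega]
        rw [hSel, ← W_zero k j v', ← cancel_sum k j v']
        have rearr : ∀ (A B C D : Cinf k), B + C + (A + D) = (A + B) + (C + D) :=
          fun A B C D => by abel
        rw [rearr, hsign, add_zero]
    · have hv : hWord k (i :: v) = 0 := by
        cases v with
        | nil => exact hWord_single k i
        | cons j v' => rw [hWord_cons, if_neg hi]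
      rw [hmap_word, hv, map_zero, zero_add]
      rw [delta0_word, deltaWord_cons, map_add, map_zsmul, hmap_mul_ne' k i hi,
        smul_zero, add_zero]
      have h2le : 2 ≤ (i:ℕ) := by
        rcases Nat.lt_or_ge (i:ℕ) 2 with h | h
        · exfalso
          apply hi
          have hp := i.pos
          have h1' : (i:ℕ) = 1 := by omega
          exact PNat.coe_injective h1'
        · exact h
      exact h_Sel_mul k i h2le v


/-! ### Homogeneity infrastructure -/

def degSum (w : List ℕ+) : ℤ := (w.map (fun (a : ℕ+) => ((a:ℕ):ℤ))).sum

lemma wordDeg_eq (w : List ℕ+) :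
    wordDeg w = (-(degSum w), (w.length:ℤ) - degSum w) := by
  have key : ∀ v : List ℕ+,
      (List.map (fun i => ((i:ℕ):ℤ)) (do let a ← v; pure ((a:ℕ)) : List ℕ)) =
      v.map (fun (a : ℕ+) => ((a:ℕ):ℤ)) := by
    intro v
    induction v with
    | nil => rfl
    | cons i t ih =>
      show ((i:ℕ):ℤ) :: (List.map (fun i => ((i:ℕ):ℤ))
        (do let a ← t; pure ((a:ℕ)) : List ℕ)) = _
      rw [ih, List.map_cons]
  rw [wordDeg, degSum, key]

lemma degSum_nil : degSum ([] : List ℕ+) = 0 := rfl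

lemma degSum_cons (i : ℕ+) (w : List ℕ+) : degSum (i :: w) = ((i:ℕ):ℤ) + degSum w := by
  simp [degSum]

lemma degSum_append (a b : List ℕ+) : degSum (a ++ b) = degSum a + degSum b := by
  simp [degSum]

lemma length_le_degSum (w : List ℕ+) : (w.length : ℤ) ≤ degSum w := by
  induction w with
  | nil => simp [degSum_nil]
  | cons i v ih =>
    rw [degSum_cons, List.length_cons]
    have := i.pos
    have hi : (1:ℤ) ≤ ((i:ℕ):ℤ) := by exact_mod_cast this
    push_cast
    omega

lemma wordDeg_nil : wordDeg ([] : List ℕ+) = (0, 0) := by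
  rw [wordDeg_eq]
  simp [degSum_nil]

lemma wordDeg_append (a b : List ℕ+) : wordDeg (a ++ b) = wordDeg a + wordDeg b := by
  rw [wordDeg_eq, wordDeg_eq, wordDeg_eq, degSum_append, List.length_append, Prod.mk_add_mk,
    Prod.mk.injEq]
  constructor <;> push_cast <;> ring

lemma wordDeg_cons (i : ℕ+) (w : List ℕ+) :
    wordDeg (i :: w) = (-((i:ℕ):ℤ), 1-((i:ℕ):ℤ)) + wordDeg w := by
  rw [wordDeg_eq, wordDeg_eq, degSum_cons, List.length_cons, Prod.mk_add_mk, Prod.mk.injEq]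
  constructor <;> push_cast <;> ring

lemma homog_zero (p q : ℤ) : IsHomog k p q 0 := by
  intro w hw
  simp at hw

lemma homog_add {p q : ℤ} {x y : Cinf k} (hx : IsHomog k p q x) (hy : IsHomog k p q y) :
    IsHomog k p q (x + y) := by
  classical
  intro w hw
  rcases Finset.mem_union.mp (Finsupp.support_add hw) with h | h
  · exact hx w h
  · exact hy w h

lemma homog_smul {p q : ℤ} (c : k) {x : Cinf k} (hx : IsHomog k p q x) :
    IsHomog k p q (c • x) := fun w hw => hx w (Finsupp.support_smul hw)

lemma homog_zsmul {p q : ℤ} (z : ℤ) {x : Cinf k} (hx : IsHomog k p q x) :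
    IsHomog k p q (z • x) := by
  rw [← Int.cast_smul_eq_zsmul k]
  exact homog_smul k _ hx

lemma homog_sum {p q : ℤ} {ι : Type*} {s : Finset ι} {f : ι → Cinf k}
    (h : ∀ i ∈ s, IsHomog k p q (f i)) : IsHomog k p q (∑ i ∈ s, f i) := by
  classical
  induction s using Finset.induction with
  | empty => simpa using homog_zero k p q
  | insert _ _ hni ih =>
    rw [Finset.sum_insert hni]
    exact homog_add k (h _ (Finset.mem_insert_self _ _))
      (ih fun i hi => h i (Finset.mem_insert_of_mem hi))

lemma homog_word {p q : ℤ} (w : List ℕ+) (h : wordDeg w = (p, q)) :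
    IsHomog k p q (word k w) := by
  intro u hu
  have hsub : (word k w).coeff.support ⊆ {FreeMonoid.ofList w} :=
    Finsupp.support_single_subset
  have := Finset.mem_singleton.mp (hsub hu)
  subst this
  exact h

lemma homog_mul {p q p' q' : ℤ} {x y : Cinf k} (hx : IsHomog k p q x)
    (hy : IsHomog k p' q' y) : IsHomog k (p + p') (q + q') (x * y) := by
  intro w hw
  classical
  have := MonoidAlgebra.support_coeff_mul_subset x y hw
  rcases Finset.mem_mul.mp this with ⟨a, ha, b, hb, hab⟩
  subst hab
  rw [FreeMonoid.toList_mul, wordDeg_append, hx a ha, hy b hb, Prod.mk_add_mk]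

lemma homog_Sel (m : ℕ+) : IsHomog k (-((m:ℕ):ℤ)) (2-((m:ℕ):ℤ)) (Sel k m) := by
  rw [Sel]
  apply homog_sum
  intro u _
  apply homog_zsmul
  apply homog_word
  have hu := u.isLt
  rw [wordDeg_eq]
  erw [degSum_cons, degSum_cons, degSum_nil, PNat.mk_coe]
  show (-((((u:ℕ)+1 : ℕ) : ℤ) + ((((m:ℕ) - ((u:ℕ)+1) : ℕ) : ℤ) + 0)),
    ((2:ℕ):ℤ) - ((((u:ℕ)+1 : ℕ):ℤ) + ((((m:ℕ) - ((u:ℕ)+1) : ℕ):ℤ) + 0))) =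
    (-((m:ℕ):ℤ), 2 - ((m:ℕ):ℤ))
  simp only [Prod.mk.injEq]
  constructor <;> push_cast <;> omega

lemma homog_deltaWord {p q : ℤ} (w : List ℕ+) (h : wordDeg w = (p, q)) :
    IsHomog k p (q + 1) (deltaWord k w) := by
  induction w generalizing p q with
  | nil =>
    rw [deltaWord_nil]
    exact homog_zero k _ _
  | cons i v ih =>
    rw [deltaWord_cons]
    rw [wordDeg_cons] at h
    rcases hv : wordDeg v with ⟨pv, qv⟩
    rw [hv, Prod.mk_add_mk, Prod.mk.injEq] at h
    obtain ⟨hp, hq⟩ := h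
    apply homog_add
    · have := homog_mul k (homog_Sel k i) (homog_word k v hv)
      have e1 : -((i:ℕ):ℤ) + pv = p := by omega
      have e2 : (2-((i:ℕ):ℤ)) + qv = q + 1 := by omega
      rwa [e1, e2] at this
    · apply homog_zsmul
      have hone : wordDeg [i] = (-((i:ℕ):ℤ), 1-((i:ℕ):ℤ)) := by
        rw [wordDeg_eq]
        simp [degSum_cons, degSum_nil]
      have := homog_mul k (homog_word k [i] hone) (ih hv)
      have e1 : -((i:ℕ):ℤ) + pv = p := by omega
      have e2 : (1-((i:ℕ):ℤ)) + (qv + 1) = q + 1 := by omega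
      rwa [e1, e2] at this

lemma homog_hWord {p q : ℤ} (w : List ℕ+) (h : wordDeg w = (p, q)) :
    IsHomog k p (q - 1) (hWord k w) := by
  match w with
  | [] => rw [hWord_nil]; exact homog_zero k _ _
  | [i] => rw [hWord_single]; exact homog_zero k _ _
  | (i :: j :: v) =>
    rw [hWord_cons]
    by_cases hi : i = 1
    · subst hi
      rw [if_pos rfl]
      apply homog_word
      rcases hv : wordDeg v with ⟨pv, qv⟩
      rw [wordDeg_cons, wordDeg_cons, hv, Prod.mk_add_mk, Prod.mk_add_mk, Prod.mk.injEq] at h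
      obtain ⟨hp, hq⟩ := h
      rw [wordDeg_cons, hv, Prod.mk_add_mk, Prod.mk.injEq]
      have hc : (((j+1):ℕ+):ℕ) = (j:ℕ)+1 := rfl
      have hone : ((1:ℕ+):ℕ) = 1 := rfl
      rw [hc]
      rw [hone] at hp hq
      simp only at hp hq
      constructor <;> push_cast at hp hq ⊢ <;> omega
    · rw [if_neg hi]
      exact homog_zero k _ _

lemma delta0_apply (x : Cinf k) :
    delta0 k x = x.coeff.sum fun w c => c • deltaWord k w.toList :=
  Finsupp.lift_apply _ _ _ _ x.coeff

lemma hmap_apply (x : Cinf k) :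
    hmap k x = x.coeff.sum fun w c => c • hWord k w.toList :=
  Finsupp.lift_apply _ _ _ _ x.coeff

lemma homog_delta0 {p q : ℤ} {x : Cinf k} (hx : IsHomog k p q x) :
    IsHomog k p (q + 1) (delta0 k x) := by
  rw [delta0_apply, Finsupp.sum]
  apply homog_sum
  intro w hw
  exact homog_smul k _ (homog_deltaWord k _ (hx w hw))

lemma homog_hmap {p q : ℤ} {x : Cinf k} (hx : IsHomog k p q x) :
    IsHomog k p (q - 1) (hmap k x) := by
  rw [hmap_apply, Finsupp.sum]
  apply homog_sum
  intro w hw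
  exact homog_smul k _ (homog_hWord k _ (hx w hw))

lemma repr_support (x : Cinf k) :
    x = ∑ w ∈ x.coeff.support, (x.coeff w) • word k w.toList := by
  conv_lhs => rw [← MonoidAlgebra.sum_coeff_single x]
  rw [Finsupp.sum]
  refine Finset.sum_congr rfl fun w hw => ?_
  exact single_eq_smul_word k w (x.coeff w)

lemma homotopy_elem (x : Cinf k)
    (hx : ∀ w ∈ x.coeff.support, w.toList ≠ [] ∧ w.toList ≠ [1]) :
    delta0 k (hmap k x) + hmap k (delta0 k x) = x := by
  have key : delta0 k (hmap k x) + hmap k (delta0 k x) =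
      ∑ w ∈ x.coeff.support, (x.coeff w) •
        (delta0 k (hmap k (word k w.toList)) + hmap k (delta0 k (word k w.toList))) := by
    conv_lhs => rw [repr_support k x]
    simp only [map_sum, map_smul, smul_add, Finset.sum_add_distrib]
  rw [key]
  calc ∑ w ∈ x.coeff.support, (x.coeff w) •
        (delta0 k (hmap k (word k w.toList)) + hmap k (delta0 k (word k w.toList)))
      = ∑ w ∈ x.coeff.support, (x.coeff w) • word k w.toList := by
        refine Finset.sum_congr rfl fun w hw => ?_
        rw [homotopy_word k _ (hx w hw).1 (hx w hw).2]
    _ = x := (repr_support k x).symm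

lemma deg_eq_zero_zero (w : List ℕ+) (h : wordDeg w = (0, 0)) : w = [] := by
  rw [wordDeg_eq, Prod.mk.injEq] at h
  obtain ⟨h1, h2⟩ := h
  have := length_le_degSum w
  have hlen : w.length = 0 := by omega
  exact List.length_eq_zero_iff.mp hlen

lemma deg_eq_neg_one_zero (w : List ℕ+) (h : wordDeg w = (-1, 0)) : w = [1] := by
  rw [wordDeg_eq, Prod.mk.injEq] at h
  obtain ⟨h1, h2⟩ := h
  have hlen : w.length = 1 := by omega
  obtain ⟨i, rfl⟩ := List.length_eq_one_iff.mp hlen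
  rw [degSum_cons, degSum_nil] at h1
  have hi : ((i:ℕ):ℤ) = 1 := by omega
  have hi' : (i:ℕ) = 1 := by exact_mod_cast hi
  rw [show i = 1 from PNat.coe_injective hi']


lemma wordDeg_d1 : wordDeg [(1:ℕ+)] = (-1, 0) := by
  rw [wordDeg_eq]
  simp [degSum_cons, degSum_nil]

lemma deltaWord_d1 : deltaWord k [1] = 0 := by
  rw [show ([1] : List ℕ+) = 1 :: [] from rfl, deltaWord_cons, Sel_one, zero_mul,
    deltaWord_nil, mul_zero, smul_zero, add_zero]

end AuxLemmas

/-- `δ_0` is homogeneous of bidegree `(0,1)`, and the `δ_0`-cohomology of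
`C_∞` is `k·[1]` in bidegree `(0,0)`, `k·[d_1]` in bidegree `(-1,0)`, and `0` in every
other bidegree. -/
theorem delta0_cohomology (k : Type u) [CommRing k] :
    -- `δ_0` is homogeneous of bidegree `(0,1)`:
    (∀ (p q : ℤ) (x : Cinf k), IsHomog k p q x → IsHomog k p (q + 1) (delta0 k x)) ∧
    -- `H^{0,0}(C_∞) = k·[1]`:
    ({x : Cinf k | IsHomog k 0 0 x ∧ delta0 k x = 0} =
      Set.range (fun c : k => c • (1 : Cinf k))) ∧
    (∀ y : Cinf k, IsHomog k 0 (-1) y → delta0 k y = 0) ∧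
    (∀ c c' : k, c • (1 : Cinf k) = c' • (1 : Cinf k) → c = c') ∧
    -- `H^{-1,0}(C_∞) = k·[d_1]`:
    ({x : Cinf k | IsHomog k (-1) 0 x ∧ delta0 k x = 0} =
      Set.range (fun c : k => c • word k [1])) ∧
    (∀ y : Cinf k, IsHomog k (-1) (-1) y → delta0 k y = 0) ∧
    (∀ c c' : k, c • word k [1] = c' • word k [1] → c = c') ∧
    -- `H^{p,q}(C_∞) = 0` for `(p,q) ∉ {(0,0), (-1,0)}`:
    (∀ p q : ℤ, ¬(p = 0 ∧ q = 0) → ¬(p = -1 ∧ q = 0) →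
      ∀ x : Cinf k, IsHomog k p q x → delta0 k x = 0 →
        ∃ y : Cinf k, IsHomog k p (q - 1) y ∧ delta0 k y = x) := by
  classical
  refine ⟨fun p q x hx => homog_delta0 k hx, ?_, ?_, ?_, ?_, ?_, ?_, ?_⟩
  · -- H^{0,0}
    ext x
    simp only [Set.mem_setOf_eq, Set.mem_range]
    constructor
    · rintro ⟨hx, _⟩
      have hsub : x.coeff.support ⊆ {(1 : FreeMonoid ℕ+)} := by
        intro w hw
        have hnil := deg_eq_zero_zero _ (hx w hw)
        rw [Finset.mem_singleton]
        have : FreeMonoid.ofList w.toList = FreeMonoid.ofList [] := by rw [hnil]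
        rwa [FreeMonoid.ofList_toList] at this
      have hx1 := Finsupp.support_subset_singleton.mp hsub
      refine ⟨x.coeff 1, ?_⟩
      show (x.coeff 1) • (1 : Cinf k) = x
      conv_rhs => rw [← MonoidAlgebra.ofCoeff_coeff x, hx1, MonoidAlgebra.ofCoeff_single]
      rw [← word_nil k]
      exact (single_eq_smul_word k 1 (x.coeff 1)).symm
    · rintro ⟨c, rfl⟩
      constructor
      · have := homog_smul k c (homog_word k [] wordDeg_nil)
        rwa [word_nil] at this
      · show delta0 k (c • (1 : Cinf k)) = 0
        rw [← word_nil k, map_smul, delta0_word, deltaWord_nil, smul_zero]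
  · -- bidegree (0,-1) is zero
    intro y hy
    have h0 : y = 0 := by
      refine MonoidAlgebra.coeff_injective (Finsupp.support_eq_empty.mp (Finset.eq_empty_iff_forall_notMem.mpr
        fun w hw => ?_))
      have hd := hy w hw
      rw [wordDeg_eq, Prod.mk.injEq] at hd
      obtain ⟨h1, h2⟩ := hd
      have h3 := length_le_degSum w.toList
      have h4 : (0:ℤ) ≤ (w.toList.length : ℤ) := Int.natCast_nonneg _
      omega
    rw [h0, map_zero]
  · -- injectivity for 1
    intro c c' h
    rw [show (1 : Cinf k) = MonoidAlgebra.single (1 : FreeMonoid ℕ+) (1:k) from rfl,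
      MonoidAlgebra.smul_single', MonoidAlgebra.smul_single', mul_one, mul_one] at h
    exact MonoidAlgebra.single_right_injective h
  · -- H^{-1,0}
    ext x
    simp only [Set.mem_setOf_eq, Set.mem_range]
    constructor
    · rintro ⟨hx, _⟩
      have hsub : x.coeff.support ⊆ {FreeMonoid.ofList [(1:ℕ+)]} := by
        intro w hw
        have hone := deg_eq_neg_one_zero _ (hx w hw)
        rw [Finset.mem_singleton]
        have : FreeMonoid.ofList w.toList = FreeMonoid.ofList [(1:ℕ+)] := by rw [hone]
        rwa [FreeMonoid.ofList_toList] at this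
      have hx1 := Finsupp.support_subset_singleton.mp hsub
      refine ⟨x.coeff (FreeMonoid.ofList [(1:ℕ+)]), ?_⟩
      show (x.coeff (FreeMonoid.ofList [(1:ℕ+)])) • word k [1] = x
      conv_rhs => rw [← MonoidAlgebra.ofCoeff_coeff x, hx1, MonoidAlgebra.ofCoeff_single]
      exact (single_eq_smul_word k (FreeMonoid.ofList [(1:ℕ+)]) _).symm
    · rintro ⟨c, rfl⟩
      constructor
      · exact homog_smul k c (homog_word k [1] wordDeg_d1)
      · show delta0 k (c • word k [1]) = 0
        rw [map_smul, delta0_word, deltaWord_d1, smul_zero]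
  · -- bidegree (-1,-1) is zero
    intro y hy
    have h0 : y = 0 := by
      refine MonoidAlgebra.coeff_injective (Finsupp.support_eq_empty.mp (Finset.eq_empty_iff_forall_notMem.mpr
        fun w hw => ?_))
      have hd := hy w hw
      rw [wordDeg_eq, Prod.mk.injEq] at hd
      obtain ⟨h1, h2⟩ := hd
      have hlen : w.toList.length = 0 := by omega
      have hnil := List.length_eq_zero_iff.mp hlen
      rw [hnil, degSum_nil] at h1
      omega
    rw [h0, map_zero]
  · -- injectivity for d_1
    intro c c' h
    rw [show word k [1] = MonoidAlgebra.single (FreeMonoid.ofList [(1:ℕ+)]) (1:k) from rfl,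
      MonoidAlgebra.smul_single', MonoidAlgebra.smul_single', mul_one, mul_one] at h
    exact MonoidAlgebra.single_right_injective h
  · -- all other bidegrees vanish
    intro p q hp0 hp1 x hx hdx
    have hw : ∀ w ∈ x.coeff.support, w.toList ≠ [] ∧ w.toList ≠ [1] := by
      intro w hws
      have hd := hx w hws
      constructor
      · intro hnil
        rw [hnil, wordDeg_nil, Prod.mk.injEq] at hd
        exact hp0 ⟨hd.1.symm, hd.2.symm⟩
      · intro hone
        rw [hone, wordDeg_d1, Prod.mk.injEq] at hd
        exact hp1 ⟨hd.1.symm, hd.2.symm⟩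
    refine ⟨hmap k x, homog_hmap k hx, ?_⟩
    have hid := homotopy_elem k x hw
    rwa [hdx, map_zero, add_zero] at hid
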